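/- arXiv:1701.01190 — 17 statements merged into one kernel-verified Lean document; each statement's English description precedes it below -/
import Mathlib

section
/- Two distinct maximal repetitions in a word with the same minimal period p cannot have an overlap of length greater than or equal to p. That is, if r1 = w[i1..j1] and r2 = w[i2..j2] are distinct maximal repetitions of w with p(r1) = p(r2) = p and i1 ≤ i2, then j1 - i2 + 1 < p. -/
variable {α : Type*}

/-- `w[k] = w[k+p]` for all positions `k` with `i ≤ k` and `k + p ≤ j`:
the factor `w[i..j]` has period `p`. -/
def HasPeriod (w : ℕ → α) (i j p : ℕ) : Prop :=
  ∀ k, i ≤ k → k + p ≤ j → w k = w (k + p)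

/-- `p` is the minimal period of the factor `w[i..j]`. -/
def IsMinPeriod (w : ℕ → α) (i j p : ℕ) : Prop :=
  0 < p ∧ HasPeriod w i j p ∧ ∀ q, 0 < q → HasPeriod w i j q → p ≤ q

/-- The factor `w[i..j]` is a repetition with minimal period `p`: its length
`j - i + 1` is at least `2p`. -/
def IsRepetition (w : ℕ → α) (i j p : ℕ) : Prop :=
  IsMinPeriod w i j p ∧ i + 2 * p ≤ j + 1

/-- The factor `w[i..j]` of the word `w[1..n]` is a maximal repetition with
minimal period `p`. -/
def IsMaxRepetition (w : ℕ → α) (n i j p : ℕ) : Prop :=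
  1 ≤ i ∧ i ≤ j ∧ j ≤ n ∧ IsRepetition w i j p ∧
  (1 < i → w (i - 1) ≠ w (i - 1 + p)) ∧ (j < n → w (j + 1 - p) ≠ w (j + 1))

/-- A gapped repeat with left copy starting at `s`, right copy starting at `t`,
copies of length `c`, and a nonempty gap. -/
def IsGappedRepeat (w : ℕ → α) (s t c : ℕ) : Prop :=
  0 < c ∧ s + c < t ∧ ∀ k, k < c → w (s + k) = w (t + k)

/-- A maximal gapped repeat in the word `w[1..n]`. -/
def IsMaxGappedRepeat (w : ℕ → α) (n s t c : ℕ) : Prop :=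
  IsGappedRepeat w s t c ∧ 1 ≤ s ∧ t + c - 1 ≤ n ∧
  (1 < s → w (s - 1) ≠ w (t - 1)) ∧
  (t + c - 1 < n → w (s + c) ≠ w (t + c))

/-- Two distinct maximal repetitions with the same minimal period `p` cannot
overlap in `p` or more positions: if `i1 ≤ i2` then `j1 - i2 + 1 < p`. -/
theorem overlap_lemma (w : ℕ → α) (n i1 j1 i2 j2 p : ℕ)
    (h1 : IsMaxRepetition w n i1 j1 p) (h2 : IsMaxRepetition w n i2 j2 p)
    (hne : (i1, j1) ≠ (i2, j2)) (hle : i1 ≤ i2) :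
    j1 + 1 < i2 + p := by
  by_contra hc
  push_neg at hc
  obtain ⟨hi1, hij1, hjn1, ⟨⟨hp, hper1, -⟩, hrep1⟩, hl1, hr1⟩ := h1
  obtain ⟨hi2, hij2, hjn2, ⟨⟨-, hper2, -⟩, hrep2⟩, hl2, hr2⟩ := h2
  rcases Nat.lt_or_ge i1 i2 with h | hge
  · exact hl2 (by omega) (hper1 (i2 - 1) (by omega) (by omega))
  · have h : i1 = i2 := le_antisymm hle hge
    have hj2 : j1 ≠ j2 := fun e => hne (by rw [h, e])
    rcases lt_or_gt_of_ne hj2 with hj | hj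
    · have h' := hper2 (j1 + 1 - p) (by omega) (by omega)
      rw [show j1 + 1 - p + p = j1 + 1 from by omega] at h'
      exact hr1 (by omega) h'
    · have h' := hper1 (j2 + 1 - p) (by omega) (by omega)
      rw [show j2 + 1 - p + p = j2 + 1 from by omega] at h'
      exact hr2 (by omega) h'
end

section
/- If uu is a primitive square (i.e., u is a primitive word), then for any two distinct occurrences v' and v'' of uu in a word w, the start positions of v' and v'' differ by at least |u|. -/
variable {α : Type*}

/-- A word `u` of length `m` (given as `u 0, …, u (m-1)`) is primitive:
it is not a proper power of a shorter word. -/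
def IsPrimitiveWord (u : ℕ → α) (m : ℕ) : Prop :=
  ¬∃ p, 0 < p ∧ p < m ∧ p ∣ m ∧ ∀ k, k + p < m → u k = u (k + p)


/-- Helper: if `uu` occurs at `s1` and at `s2 = s1 + d` with `0 < d < m`,
then `u` is not primitive — contradiction. -/
lemma primitive_square_aux (w u : ℕ → α) (m : ℕ) (hm : 0 < m)
    (hprim : IsPrimitiveWord u m) (s1 s2 : ℕ)
    (h1 : ∀ k, k < 2 * m → w (s1 + k) = u (k % m))
    (h2 : ∀ k, k < 2 * m → w (s2 + k) = u (k % m))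
    (hlt : s1 < s2) (hd : s2 - s1 < m) : False := by
  set d := s2 - s1 with hd_def
  have hdpos : 0 < d := by omega
  -- Step 1: u j = u ((j + d) % m) for all j < m
  have step : ∀ j, j < m → u j = u ((j + d) % m) := by
    intro j hj
    have e1 := h2 j (by omega)
    have e2 := h1 (d + j) (by omega)
    have hs : s1 + (d + j) = s2 + j := by omega
    rw [hs] at e2
    rw [Nat.mod_eq_of_lt hj] at e1
    rw [← e1, e2, Nat.add_comm d j]
  -- Step 2: iterate
  have key : ∀ t j, j < m → u j = u ((j + t * d) % m) := by
    intro t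
    induction t with
    | zero => intro j hj; simp [Nat.mod_eq_of_lt hj]
    | succ t ih =>
      intro j hj
      have h' := step ((j + t * d) % m) (Nat.mod_lt _ hm)
      rw [ih j hj, h']
      rw [Nat.mod_add_mod]
      congr 1
      ring
  -- Step 3: find t with (t * d) % m = gcd d m
  set g := Nat.gcd d m with hg_def
  have hgab := Nat.gcd_eq_gcd_ab d m
  set a := Nat.gcdA d m
  set b := Nat.gcdB d m
  have hmz : (0 : ℤ) < (m : ℤ) := by exact_mod_cast hm
  set t : ℕ := (a % (m : ℤ)).toNat with ht_def
  have ht : (t : ℤ) = a % (m : ℤ) := Int.toNat_of_nonneg (Int.emod_nonneg a (by omega))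
  have hmod1 : ((t * d : ℕ) : ℤ) % (m : ℤ) = ((a * d) : ℤ) % (m : ℤ) := by
    push_cast [ht]
    rw [Int.mul_emod, Int.emod_emod_of_dvd a dvd_rfl, ← Int.mul_emod]
  have hglt : g < m := by
    have : g ≤ d := Nat.le_of_dvd hdpos (Nat.gcd_dvd_left d m)
    omega
  have hgpos : 0 < g := Nat.gcd_pos_of_pos_left m hdpos
  have hmod2 : ((a * d) : ℤ) % (m : ℤ) = (g : ℤ) := by
    have hdiv : (m : ℤ) ∣ (a * d - (g : ℤ)) := ⟨-b, by rw [hg_def, hgab]; ring⟩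
    obtain ⟨c, hc⟩ := hdiv
    have : (a * d : ℤ) = (g : ℤ) + m * c := by linarith
    rw [this, Int.add_mul_emod_self_left]
    exact Int.emod_eq_of_lt (by positivity) (by exact_mod_cast hglt)
  have hmod : (t * d) % m = g := by
    have h3 : ((t * d % m : ℕ) : ℤ) = (g : ℤ) := by
      rw [Int.natCast_mod, hmod1, hmod2]
    exact_mod_cast h3
  -- Step 4: u has period g
  apply hprim
  refine ⟨g, hgpos, hglt, Nat.gcd_dvd_right d m, fun k hk => ?_⟩
  have := key t k (by omega)
  rw [Nat.add_mod, hmod, Nat.mod_eq_of_lt (by omega : k < m),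
    Nat.mod_eq_of_lt (by omega : k + g < m)] at this
  exact this

/-- Two distinct occurrences of a primitive square `uu` in `w` have start
positions differing by at least `|u|`. -/
theorem primitive_square_occurrences (w u : ℕ → α) (m : ℕ) (hm : 0 < m)
    (hprim : IsPrimitiveWord u m) (s1 s2 : ℕ)
    (h1 : ∀ k, k < 2 * m → w (s1 + k) = u (k % m))
    (h2 : ∀ k, k < 2 * m → w (s2 + k) = u (k % m))
    (hne : s1 ≠ s2) : m ≤ Nat.dist s1 s2 := by
  by_contra hcon
  push_neg at hcon
  simp only [Nat.dist] at hcon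
  rcases Nat.lt_or_ge s1 s2 with h | h
  · exact primitive_square_aux w u m hm hprim s1 s2 h1 h2 h (by omega)
  · have hlt : s2 < s1 := by omega
    exact primitive_square_aux w u m hm hprim s2 s1 h2 h1 hlt (by omega)
end

section
/- For any two distinct occurrences v' and v'' of the same repetition r in a word w, the start positions of v' and v'' differ by at least p(r), the minimal period of r. -/
variable {α : Type*}

lemma repetition_occurrences_aux (w : ℕ → α) (i j p : ℕ)
    (hrep : IsRepetition w i j p) (s1 s2 : ℕ)
    (h1 : ∀ k, k ≤ j - i → w (s1 + k) = w (i + k))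
    (h2 : ∀ k, k ≤ j - i → w (s2 + k) = w (i + k))
    (hlt : s1 < s2) : p ≤ s2 - s1 := by
  obtain ⟨⟨hp, hper, hmin⟩, _⟩ := hrep
  refine hmin _ (Nat.sub_pos_of_lt hlt) ?_
  intro k hik hkj
  set d := s2 - s1 with hd
  obtain ⟨m, rfl⟩ := Nat.exists_eq_add_of_le hik
  have hm : m + d ≤ j - i := Nat.le_sub_of_add_le (by omega)
  have e1 := h2 m (le_trans (Nat.le_add_right _ _) hm)
  have e2 := h1 (m + d) hm
  have hs2 : s2 = s1 + d := by omega
  calc w (i + m) = w (s2 + m) := (e1).symm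
    _ = w (s1 + (m + d)) := by rw [hs2]; ring_nf
    _ = w (i + (m + d)) := e2
    _ = w (i + m + d) := by ring_nf

/-- Two distinct occurrences of the same repetition `r = w[i..j]` (with minimal
period `p`) in `w` have start positions differing by at least `p`. -/
theorem repetition_occurrences (w : ℕ → α) (i j p : ℕ)
    (hrep : IsRepetition w i j p) (s1 s2 : ℕ)
    (h1 : ∀ k, k ≤ j - i → w (s1 + k) = w (i + k))
    (h2 : ∀ k, k ≤ j - i → w (s2 + k) = w (i + k))
    (hne : s1 ≠ s2) : p ≤ Nat.dist s1 s2 := by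
  rcases Nat.lt_or_ge s1 s2 with h | h
  · have := repetition_occurrences_aux w i j p hrep s1 s2 h1 h2 h
    rwa [Nat.dist_eq_sub_of_le (le_of_lt h)]
  · have hlt : s2 < s1 := lt_of_le_of_ne h (Ne.symm hne)
    have := repetition_occurrences_aux w i j p hrep s2 s1 h2 h1 hlt
    rwa [Nat.dist_eq_sub_of_le_right (le_of_lt hlt)]
end

section
/- Let σ = (u', u'') be a maximal gapped repeat in w whose copies u' and u'' extend to maximal repetitions r' and r'' respectively with the same minimal period p, where r' ≠ r''. Then beg(r') = beg(u') or beg(r'') = beg(u''), and similarly end(r') = end(u') or end(r'') = end(u''). -/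
variable {α : Type*}

/-- If the copies of a maximal gapped repeat extend to distinct maximal
repetitions `r' = w[a'..b']`, `r'' = w[a''..b'']` with the same minimal period
`p`, then `beg r' = beg u'` or `beg r'' = beg u''`, and similarly for ends. -/
theorem generating_repetitions_align (w : ℕ → α) (n s t c p a' b' a'' b'' : ℕ)
    (hs : IsMaxGappedRepeat w n s t c)
    (hr' : IsMaxRepetition w n a' b' p) (hr'' : IsMaxRepetition w n a'' b'' p)
    (hu' : IsRepetition w s (s + c - 1) p) (hu'' : IsRepetition w t (t + c - 1) p)
    (hc' : a' ≤ s ∧ s + c - 1 ≤ b') (hc'' : a'' ≤ t ∧ t + c - 1 ≤ b'')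
    (hne : (a', b') ≠ (a'', b'')) :
    (a' = s ∨ a'' = t) ∧ (b' = s + c - 1 ∨ b'' = t + c - 1) := by
  obtain ⟨⟨hc0, hst, hcopy⟩, hs1, htn, hleft, hright⟩ := hs
  obtain ⟨ha'1, ha'b', hb'n, ⟨⟨hp0, hper', -⟩, hrep'⟩, -, -⟩ := hr'
  obtain ⟨ha''1, ha''b'', hb''n, ⟨⟨-, hper'', -⟩, hrep''⟩, -, -⟩ := hr''
  obtain ⟨⟨-, -, -⟩, hlen'⟩ := hu'
  have h2p : 2 * p ≤ c := by omega
  constructor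
  · by_contra h
    push_neg at h
    obtain ⟨h1, h2⟩ := h
    have ha's : a' < s := lt_of_le_of_ne hc'.1 h1
    have ha''t : a'' < t := lt_of_le_of_ne hc''.1 h2
    have hs2 : 1 < s := by omega
    refine hleft hs2 ?_
    calc w (s - 1) = w (s - 1 + p) := hper' (s - 1) (by omega) (by omega)
      _ = w (s + (p - 1)) := by rw [show s - 1 + p = s + (p - 1) by omega]
      _ = w (t + (p - 1)) := hcopy (p - 1) (by omega)
      _ = w (t - 1 + p) := by rw [show t + (p - 1) = t - 1 + p by omega]
      _ = w (t - 1) := (hper'' (t - 1) (by omega) (by omega)).symm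
  · by_contra h
    push_neg at h
    obtain ⟨h1, h2⟩ := h
    have hb' : s + c - 1 < b' := lt_of_le_of_ne hc'.2 (Ne.symm h1)
    have hb'' : t + c - 1 < b'' := lt_of_le_of_ne hc''.2 (Ne.symm h2)
    refine hright (by omega) ?_
    calc w (s + c) = w (s + c - p + p) := by rw [show s + c - p + p = s + c by omega]
      _ = w (s + c - p) := (hper' (s + c - p) (by omega) (by omega)).symm
      _ = w (s + (c - p)) := by rw [show s + c - p = s + (c - p) by omega]
      _ = w (t + (c - p)) := hcopy (c - p) (by omega)
      _ = w (t + c - p) := by rw [show t + (c - p) = t + c - p by omega]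
      _ = w (t + c - p + p) := hper'' (t + c - p) (by omega) (by omega)
      _ = w (t + c) := by rw [show t + c - p + p = t + c by omega]
end

section
/- Let r be a maximal repetition in a word w, and consider maximal f,g-gapped repeats σ = (r, u'') whose left copy is exactly the fragment r (totally generated from left by r). Any two such repeats σ1 = (r, u''_1), σ2 = (r, u''_2) satisfy |beg(u''_1) - beg(u''_2)| ≥ p(r), and consequently the number of such repeats is at most 1 + e(r)·Δ_{f,g}, where e(r) = |r|/p(r) and Δ_{f,g} = sup_x (f(x) - g(x))/x. -/
variable {α : Type*}

/-- Repeats totally generated from left by a maximal repetition `r = w[i..j]`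
(left copy exactly `r`): any two have right-copy start positions differing by
at least `p(r)`, and their number is at most `1 + e(r)·Δ`, where
`e(r) = |r|/p(r)` and `Δ` bounds `(f x - g x)/x`. -/
theorem totally_generated_count (w : ℕ → α) (n i j p : ℕ) (f g : ℕ → ℝ) (Δ : ℝ)
    (hr : IsMaxRepetition w n i j p)
    (hΔ : ∀ x, 0 < x → f x - g x ≤ Δ * x) (hΔ0 : 0 ≤ Δ)
    (S : Set ℕ)
    (hS : S = {b | IsMaxGappedRepeat w n i b (j + 1 - i) ∧
      g (j + 1 - i) ≤ (b : ℝ) - (j + 1) ∧ (b : ℝ) - (j + 1) ≤ f (j + 1 - i)}) :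
    (∀ b1 ∈ S, ∀ b2 ∈ S, b1 ≠ b2 → p ≤ Nat.dist b1 b2) ∧
    (S.ncard : ℝ) ≤ 1 + ((j + 1 - i : ℕ) : ℝ) / p * Δ := by
  obtain ⟨hi1, hij, hjn, ⟨⟨hp0, hper, hmin⟩, hrep⟩, _, _⟩ := hr
  set c := j + 1 - i with hc
  have hc0 : 0 < c := by omega
  have key : ∀ b1 ∈ S, ∀ b2 ∈ S, b1 < b2 → p ≤ b2 - b1 := by
    intro b1 hb1 b2 hb2 hlt
    rw [hS] at hb1 hb2
    obtain ⟨⟨⟨_, hs1, hocc1⟩, _⟩, _⟩ := hb1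
    obtain ⟨⟨⟨_, hs2, hocc2⟩, _⟩, _⟩ := hb2
    apply hmin (b2 - b1) (by omega)
    intro k hk hkd
    have hm : k - i < c := by omega
    have hmd : k - i + (b2 - b1) < c := by omega
    have e2 := hocc1 (k - i + (b2 - b1)) hmd
    have e3 := hocc2 (k - i) hm
    have h2 : i + (k - i + (b2 - b1)) = k + (b2 - b1) := by omega
    have h3 : b1 + (k - i + (b2 - b1)) = b2 + (k - i) := by omega
    have h1 : i + (k - i) = k := by omega
    rw [h2, h3] at e2
    rw [h1] at e3
    rw [e2, ← e3]
  have part1 : ∀ b1 ∈ S, ∀ b2 ∈ S, b1 ≠ b2 → p ≤ Nat.dist b1 b2 := by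
    intro b1 h1 b2 h2 hne
    rcases lt_or_gt_of_ne hne with h | h
    · rw [Nat.dist_eq_sub_of_le h.le]
      exact key b1 h1 b2 h2 h
    · rw [Nat.dist_comm, Nat.dist_eq_sub_of_le h.le]
      exact key b2 h2 b1 h1 h
  refine ⟨part1, ?_⟩
  have hp0R : (0 : ℝ) < p := by exact_mod_cast hp0
  rcases Set.eq_empty_or_nonempty S with hE | hne
  · rw [hE]
    simp only [Set.ncard_empty, Nat.cast_zero]
    positivity
  · set m := sInf S with hm
    have hmS : m ∈ S := Nat.sInf_mem hne
    have hlbm : (j : ℝ) + 1 + g c ≤ m := by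
      have := (hS ▸ hmS).2.1
      linarith
    have hsub : ∀ b ∈ S, ((b - m : ℕ) : ℝ) ≤ Δ * c := by
      intro b hb
      have hub : (b : ℝ) ≤ (j : ℝ) + 1 + f c := by
        have := (hS ▸ hb).2.2
        linarith
      have hmb : m ≤ b := Nat.sInf_le hb
      have : ((b - m : ℕ) : ℝ) = (b : ℝ) - m := by
        push_cast [Nat.cast_sub hmb]; ring
      rw [this]
      have hfg : f c - g c ≤ Δ * c := hΔ c hc0
      linarith
    set K := ⌊Δ * c / p⌋₊ with hK
    set φ : ℕ → ℕ := fun b => (b - m) / p with hφ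
    have step : ∀ b1 ∈ S, ∀ b2 ∈ S, b1 < b2 → φ b1 ≠ φ b2 := by
      intro b1 h1 b2 h2 hlt heq
      have hsep := key b1 h1 b2 h2 hlt
      have hm1 : m ≤ b1 := Nat.sInf_le h1
      have hd : b1 - m + p ≤ b2 - m := by omega
      have : (b1 - m) / p + 1 ≤ (b2 - m) / p := by
        calc (b1 - m) / p + 1 = (b1 - m + p) / p := (Nat.add_div_right _ hp0).symm
        _ ≤ (b2 - m) / p := Nat.div_le_div_right hd
      simp only [hφ] at heq
      omega
    have hinj : Set.InjOn φ S := by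
      intro b1 h1 b2 h2 heq
      rcases lt_trichotomy b1 b2 with h | h | h
      · exact absurd heq (step b1 h1 b2 h2 h)
      · exact h
      · exact absurd heq.symm (step b2 h2 b1 h1 h)
    have himg : φ '' S ⊆ Set.Iic K := by
      rintro x ⟨b, hb, rfl⟩
      simp only [Set.mem_Iic, hφ, hK]
      apply Nat.le_floor
      calc ((b - m) / p : ℕ) ≤ (((b - m : ℕ) : ℝ)) / p := Nat.cast_div_le
      _ ≤ Δ * c / p := by gcongr; exact hsub b hb
    have hcard : S.ncard ≤ K + 1 := by
      have h1 : S.ncard = (φ '' S).ncard := (Set.ncard_image_of_injOn hinj).symm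
      have h2 : (φ '' S).ncard ≤ (Set.Iic K).ncard :=
        Set.ncard_le_ncard himg (Set.finite_Iic K)
      have h3 : (Set.Iic K).ncard = K + 1 := by
        rw [← Finset.coe_Iic, Set.ncard_coe_finset, Nat.card_Iic]
      omega
    have hKR : (K : ℝ) ≤ Δ * c / p := Nat.floor_le (by positivity)
    have : (S.ncard : ℝ) ≤ (K : ℝ) + 1 := by exact_mod_cast hcard
    have hcpos : (0:ℝ) < (c:ℝ) := by exact_mod_cast hc0
    calc (S.ncard : ℝ) ≤ (K : ℝ) + 1 := this
    _ ≤ Δ * c / p + 1 := by linarith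
    _ = 1 + (c : ℝ) / p * Δ := by field_simp; ring
end

section
/- Let r and r' be two maximal repetitions in a word w with the same minimal period p(r) and beg(r) < beg(r'). Then the number of maximal gapped repeats (u, u') with u a prefix of r that is a repetition with minimal period p(r) and u' a suffix of r' (equal to u as a word) is strictly less than e(r) = |r|/p(r). -/
variable {α : Type*}

/-- The last `2p` letters of the left copy agree with the last `2p` letters of
`r'` (which end the right copy). -/
lemma square_eq (w : ℕ → α) (n i j' e p : ℕ)
    (hrep : IsRepetition w i e p)
    (hmg : IsMaxGappedRepeat w n i (j' + 1 - (e + 1 - i)) (e + 1 - i)) :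
    ∀ m < 2 * p, w (e + 1 - 2 * p + m) = w (j' + 1 - 2 * p + m) := by
  obtain ⟨⟨hp, hper, -⟩, hle⟩ := hrep
  obtain ⟨⟨hc, hgap, heq⟩, -, -, -, -⟩ := hmg
  intro m hm
  have := heq ((e + 1 - i) - 2 * p + m) (by omega)
  have e1 : i + ((e + 1 - i) - 2 * p + m) = e + 1 - 2 * p + m := by omega
  have e2 : (j' + 1 - (e + 1 - i)) + ((e + 1 - i) - 2 * p + m)
      = j' + 1 - 2 * p + m := by omega
  rw [e1, e2] at this
  exact this

/-- Two distinct end positions of such maximal gapped repeats differ by at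
least `p`. -/
lemma spacing (w : ℕ → α) (n i j' e1 e2 p : ℕ)
    (h1 : IsRepetition w i e1 p)
    (hmg1 : IsMaxGappedRepeat w n i (j' + 1 - (e1 + 1 - i)) (e1 + 1 - i))
    (h2 : IsRepetition w i e2 p)
    (hmg2 : IsMaxGappedRepeat w n i (j' + 1 - (e2 + 1 - i)) (e2 + 1 - i))
    (hlt : e1 < e2) : e1 + p ≤ e2 := by
  by_contra h
  push_neg at h
  set d := e2 - e1 with hd
  have hd0 : 0 < d := by omega
  have hdp : d < p := by omega
  have hs1 := square_eq w n i j' e1 p h1 hmg1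
  have hs2 := square_eq w n i j' e2 p h2 hmg2
  obtain ⟨⟨hp, -, hmin⟩, hle1⟩ := h1
  obtain ⟨⟨-, hper2, -⟩, hle2⟩ := h2
  -- period d on the tail [e1+1-2p, e1] of the left copy
  have key : ∀ k, e1 + 1 - 2 * p ≤ k → k + d ≤ e1 → w k = w (k + d) := by
    intro k hk hkd
    have q1 := hs1 (k - (e1 + 1 - 2 * p)) (by omega)
    have q2 := hs2 (k + d - (e2 + 1 - 2 * p)) (by omega)
    have r1 : e1 + 1 - 2 * p + (k - (e1 + 1 - 2 * p)) = k := by omega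
    have r2 : e2 + 1 - 2 * p + (k + d - (e2 + 1 - 2 * p)) = k + d := by omega
    have r3 : j' + 1 - 2 * p + (k - (e1 + 1 - 2 * p))
        = j' + 1 - 2 * p + (k + d - (e2 + 1 - 2 * p)) := by omega
    rw [r1] at q1
    rw [r2] at q2
    rw [q1, r3, ← q2]
  -- extend the period d to all of [i, e1], stepping by p
  have ext : ∀ t k, e1 - k ≤ t → i ≤ k → k + d ≤ e1 → w k = w (k + d) := by
    intro t
    induction t with
    | zero => intro k h0 hk hkd; exact key k (by omega) hkd
    | succ t ih =>
      intro k h0 hk hkd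
      by_cases hcase : e1 + 1 - 2 * p ≤ k
      · exact key k hcase hkd
      · have w1 : w k = w (k + p) := hper2 k hk (by omega)
        have w2 : w (k + d) = w (k + d + p) := hper2 (k + d) (by omega) (by omega)
        have h' := ih (k + p) (by omega) (by omega) (by omega)
        rw [w1, w2, show k + d + p = k + p + d by ring]
        exact h'
  have hperd : HasPeriod w i e1 d := fun k hk hkd => ext e1 k (by omega) hk hkd
  have := hmin d hd0 hperd
  omega

/-- The number of maximal gapped repeats whose left copy is a prefix of `r`
that is a repetition with minimal period `p(r)`, and whose right copy is the
corresponding suffix of `r'`, is strictly less than `e(r) = |r|/p(r)`. Such a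
repeat is determined by the end position `e` of its left copy. -/
theorem prefixly_generated_count (w : ℕ → α) (n i j i' j' p : ℕ)
    (hr : IsMaxRepetition w n i j p) (hr' : IsMaxRepetition w n i' j' p)
    (hlt : i < i') :
    (({e : ℕ | e ≤ j ∧ IsRepetition w i e p ∧
        IsMaxGappedRepeat w n i (j' + 1 - (e + 1 - i)) (e + 1 - i)}).ncard : ℝ)
      < ((j + 1 - i : ℕ) : ℝ) / p := by
  obtain ⟨hi1, hij, hjn, ⟨⟨hp0, -, -⟩, hlenr⟩, -, -⟩ := hr
  set S : Set ℕ := {e : ℕ | e ≤ j ∧ IsRepetition w i e p ∧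
      IsMaxGappedRepeat w n i (j' + 1 - (e + 1 - i)) (e + 1 - i)} with hS
  set base := i + 2 * p - 1 with hbase
  set q := (j - base) / p with hq
  have hmaps : ∀ e ∈ S, (fun e => (e - base) / p) e ∈ (↑(Finset.range (q + 1)) : Set ℕ) := by
    intro e he
    obtain ⟨hej, -, -⟩ := he
    simp only [Finset.coe_range, Set.mem_Iio]
    exact Nat.lt_succ_of_le (Nat.div_le_div_right (Nat.sub_le_sub_right hej _))
  have hinj : Set.InjOn (fun e => (e - base) / p) S := by
    intro e1 h1 e2 h2 hfe
    have hfe' : (e1 - base) / p = (e2 - base) / p := hfe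
    by_contra hne
    rcases lt_or_gt_of_ne hne with hl | hl
    · have hsp := spacing w n i j' e1 e2 p h1.2.1 h1.2.2 h2.2.1 h2.2.2 hl
      have hb1 : i + 2 * p ≤ e1 + 1 := h1.2.1.2
      have hstep : (e1 - base) / p + 1 ≤ (e2 - base) / p := by
        rw [← Nat.add_div_right _ hp0]
        exact Nat.div_le_div_right (by omega)
      rw [hfe'] at hstep
      exact Nat.not_succ_le_self _ hstep
    · have hsp := spacing w n i j' e2 e1 p h2.2.1 h2.2.2 h1.2.1 h1.2.2 hl
      have hb1 : i + 2 * p ≤ e2 + 1 := h2.2.1.2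
      have hstep : (e2 - base) / p + 1 ≤ (e1 - base) / p := by
        rw [← Nat.add_div_right _ hp0]
        exact Nat.div_le_div_right (by omega)
      rw [← hfe'] at hstep
      exact Nat.not_succ_le_self _ hstep
  have hcard : S.ncard ≤ q + 1 := by
    have h := Set.ncard_le_ncard_of_injOn (fun e => (e - base) / p) hmaps hinj
      ((Finset.range (q + 1)).finite_toSet)
    rwa [Set.ncard_coe_finset, Finset.card_range] at h
  have hqp : q * p ≤ j - base := Nat.div_mul_le_self _ _
  have hnat : (q + 1) * p < j + 1 - i := by
    have hexp : (q + 1) * p = q * p + p := by ring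
    obtain ⟨A, hA1, hA2⟩ : ∃ A, A = q * p ∧ A ≤ j - base := ⟨q * p, rfl, hqp⟩
    rw [hexp, ← hA1]
    omega
  calc (S.ncard : ℝ) ≤ ((q + 1 : ℕ) : ℝ) := by exact_mod_cast hcard
    _ < ((j + 1 - i : ℕ) : ℝ) / p := by
        rw [lt_div_iff₀ (by exact_mod_cast hp0)]
        exact_mod_cast hnat
end

section
/- Let f, g : ℕ → ℝ with g(x) ≤ f(x) for all x, and suppose ∂⁺_f = sup_x |f(x+1)-f(x)|⁺ and ∂⁻_g = sup_x |g(x+1)-g(x)|⁻ exist, and Δ_{f,g} = sup_x (f(x)-g(x))/x exists. Then for any 1 ≤ 2p < N, max over 2p ≤ x < N of (x + f(x)) minus min over 2p ≤ x < N of (x + g(x)) is strictly less than N·(1 + Δ_{f,g} + max(∂⁺_f, ∂⁻_g)). -/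
variable {α : Type*}

private lemma tele_aux (h : ℕ → ℝ) (D : ℝ) (hD : ∀ x, h (x + 1) - h x ≤ D) :
    ∀ x n : ℕ, h (x + n) - h x ≤ D * n := by
  intro x n
  induction n with
  | zero => simp
  | succ n ih =>
    have h1 : h (x + (n + 1)) - h (x + n) ≤ D := hD (x + n)
    push_cast at ih ⊢
    linarith

/-- Bound on `ub_f - lb_g`: the maximum of `x + f x` minus the minimum of
`x + g x` over `2p ≤ x < N` is less than `N·(1 + Δ + max ∂⁺_f ∂⁻_g)`. -/
theorem ub_sub_lb_bound (f g : ℕ → ℝ) (Df Dg Δ : ℝ)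
    (hfg : ∀ x, g x ≤ f x)
    (hDf : ∀ x, max (f (x + 1) - f x) 0 ≤ Df)
    (hDg : ∀ x, max (g x - g (x + 1)) 0 ≤ Dg)
    (hΔ : ∀ x, 0 < x → (f x - g x) / x ≤ Δ)
    (p N : ℕ) (hp : 1 ≤ p) (hN : 2 * p < N) :
    ((Finset.Ico (2 * p) N).sup' (Finset.nonempty_Ico.mpr hN)
        (fun x => (x : ℝ) + f x)) -
      ((Finset.Ico (2 * p) N).inf' (Finset.nonempty_Ico.mpr hN)
        (fun x => (x : ℝ) + g x))
      < N * (1 + Δ + max Df Dg) := by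
  set M := max Df Dg with hM
  obtain ⟨x₁, hx₁mem, hx₁⟩ := Finset.exists_mem_eq_sup' (Finset.nonempty_Ico.mpr hN)
    (fun x => (x : ℝ) + f x)
  obtain ⟨x₂, hx₂mem, hx₂⟩ := Finset.exists_mem_eq_inf' (Finset.nonempty_Ico.mpr hN)
    (fun x => (x : ℝ) + g x)
  rw [hx₁, hx₂]
  simp only [Finset.mem_Ico] at hx₁mem hx₂mem
  have hDf0 : 0 ≤ Df := le_trans (le_max_right _ _) (hDf 0)
  have hDg0 : 0 ≤ Dg := le_trans (le_max_right _ _) (hDg 0)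
  have hM0 : 0 ≤ M := le_trans hDf0 (le_max_left _ _)
  have hΔ0 : 0 ≤ Δ := by
    have h1 := hΔ 1 one_pos
    have := hfg 1
    simp at h1
    linarith
  have hDfM : Df ≤ M := le_max_left _ _
  have hDgM : Dg ≤ M := le_max_right _ _
  have hx1N : (x₁ : ℝ) ≤ (N : ℝ) - 1 := by
    have : x₁ + 1 ≤ N := hx₁mem.2
    have : ((x₁ : ℕ) : ℝ) + 1 ≤ N := by exact_mod_cast this
    linarith
  have hx2N : (x₂ : ℝ) ≤ (N : ℝ) - 1 := by
    have : x₂ + 1 ≤ N := hx₂mem.2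
    have : ((x₂ : ℕ) : ℝ) + 1 ≤ N := by exact_mod_cast this
    linarith
  have hx1pos : (1 : ℝ) ≤ x₁ := by
    have : 1 ≤ x₁ := by omega
    exact_mod_cast this
  have hx2pos : (1 : ℝ) ≤ x₂ := by
    have : 1 ≤ x₂ := by omega
    exact_mod_cast this
  have hΔ1 : f x₁ - g x₁ ≤ Δ * x₁ := by
    have h := hΔ x₁ (by omega)
    rw [div_le_iff₀ (by positivity)] at h
    linarith
  have hΔ2 : f x₂ - g x₂ ≤ Δ * x₂ := by
    have h := hΔ x₂ (by omega)
    rw [div_le_iff₀ (by positivity)] at h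
    linarith
  rcases le_or_gt x₂ x₁ with hle | hlt
  · obtain ⟨n, rfl⟩ := Nat.exists_eq_add_of_le hle
    have htel : f (x₂ + n) - f x₂ ≤ Df * n :=
      tele_aux f Df (fun x => le_trans (le_max_left _ _) (hDf x)) x₂ n
    have hn : ((x₂ + n : ℕ) : ℝ) = (x₂ : ℝ) + n := by push_cast; ring
    rw [hn] at hx1N ⊢
    have hn0 : (0 : ℝ) ≤ n := Nat.cast_nonneg n
    nlinarith [mul_le_mul_of_nonneg_left hx2N hΔ0, mul_le_mul_of_nonneg_left hDfM hn0,
      mul_nonneg hM0 (sub_nonneg.mpr hx1N)]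
  · obtain ⟨n, rfl⟩ := Nat.exists_eq_add_of_le hlt.le
    have htel : (fun x => -g x) (x₁ + n) - (fun x => -g x) x₁ ≤ Dg * n :=
      tele_aux (fun x => -g x) Dg
        (fun x => by
          linarith [le_trans (le_max_left (g x - g (x + 1)) 0) (hDg x)]) x₁ n
    simp only at htel
    have hn : ((x₁ + n : ℕ) : ℝ) = (x₁ : ℝ) + n := by push_cast; ring
    rw [hn] at hx2N ⊢
    have hn0 : (0 : ℝ) ≤ n := Nat.cast_nonneg n
    nlinarith [mul_le_mul_of_nonneg_left hx1N hΔ0, mul_le_mul_of_nonneg_left hDgM hn0,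
      mul_nonneg hM0 (sub_nonneg.mpr hx2N)]
end

section
/- Let r, r', r'' be maximal repetitions in w, all with minimal period p(r) and |r'|, |r''| ≥ |r|. Suppose that for suitable bounds L = lb_g(r) and U = ub_f(r), there exist gapped repeats σ1 = (u1, u'_1) and σ2 = (u2, u'_2), where u1, u2 are prefixes of r that are repetitions with period p(r), u'_1 is contained in r', u'_2 is contained in r'', and L ≤ beg(u'_1), beg(u'_2). Then at most one of r', r'' can satisfy beg(·) < L; i.e., if beg(r') < L and beg(r'') < L and r' ≠ r'', a contradiction arises with the overlap lemma. -/
variable {α : Type*}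

lemma not_left_lt {w : ℕ → α} {n a' b' a'' b'' p : ℕ}
    (h1 : IsMaxRepetition w n a' b' p) (h2 : IsMaxRepetition w n a'' b'' p)
    (hab : a'' + p ≤ b' + 1) : ¬ a' < a'' := by
  intro h
  obtain ⟨h1a, _, _, ⟨⟨hp, hper, _⟩, _⟩, _, _⟩ := h1
  obtain ⟨h2a, _, _, _, h2l, _⟩ := h2
  exact h2l (by omega) (hper (a'' - 1) (by omega) (by omega))

lemma not_right_lt {w : ℕ → α} {n a' b' a'' b'' p : ℕ}
    (h1 : IsMaxRepetition w n a' b' p) (h2 : IsMaxRepetition w n a'' b'' p)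
    (hab : a'' + p ≤ b' + 1) : ¬ b' < b'' := by
  intro h
  obtain ⟨h1a, _, _, ⟨⟨hp, _, _⟩, _⟩, _, h1r⟩ := h1
  obtain ⟨h2a, _, hbn, ⟨⟨_, hper, _⟩, _⟩, _, _⟩ := h2
  apply h1r (by omega)
  have := hper (b' + 1 - p) (by omega) (by omega)
  rw [this]
  congr 1
  omega

/-- At most one generating repetition can start before `L = lb_g(r)`: if both
`r'` and `r''` (each containing the right copy of a gapped repeat whose left
copy is a prefix of `r` that is a repetition with period `p`, with right-copy
start positions at least `L`) start before `L`, then `r' = r''`. -/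
theorem at_most_one_before_lb (w : ℕ → α)
    (n i j p a' b' a'' b'' L c1 c2 b1 b2 : ℕ)
    (hr : IsMaxRepetition w n i j p)
    (hr' : IsMaxRepetition w n a' b' p) (hr'' : IsMaxRepetition w n a'' b'' p)
    (hs1 : IsMaxGappedRepeat w n i b1 c1) (hu1 : IsRepetition w i (i + c1 - 1) p)
    (hpre1 : i + c1 - 1 ≤ j) (hin1 : a' ≤ b1 ∧ b1 + c1 - 1 ≤ b') (hL1 : L ≤ b1)
    (hs2 : IsMaxGappedRepeat w n i b2 c2) (hu2 : IsRepetition w i (i + c2 - 1) p)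
    (hpre2 : i + c2 - 1 ≤ j) (hin2 : a'' ≤ b2 ∧ b2 + c2 - 1 ≤ b'') (hL2 : L ≤ b2)
    (ha' : a' < L) (ha'' : a'' < L) :
    a' = a'' ∧ b' = b'' := by
  have hp : 0 < p := hr'.2.2.2.1.1.1
  have hc1 : 0 < c1 := hs1.1.1
  have hc2 : 0 < c2 := hs2.1.1
  have h2p1 : 2 * p ≤ c1 := by have := hu1.2; omega
  have h2p2 : 2 * p ≤ c2 := by have := hu2.2; omega
  have hb' : L + 2 * p - 1 ≤ b' := by have := hin1.2; omega
  have hb'' : L + 2 * p - 1 ≤ b'' := by have := hin2.2; omega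
  have hab : a'' + p ≤ b' + 1 := by omega
  have hba : a' + p ≤ b'' + 1 := by omega
  constructor
  · exact le_antisymm (le_of_not_gt (not_left_lt hr'' hr' hba))
      (le_of_not_gt (not_left_lt hr' hr'' hab))
  · exact le_antisymm (le_of_not_gt (not_right_lt hr'' hr' hba))
      (le_of_not_gt (not_right_lt hr' hr'' hab))
end

section
/- Let r be a maximal repetition in w and let r', r'' be two distinct maximal repetitions with the same minimal period p(r) and lengths |r'|, |r''| ≥ |r|, with beg(r') ≤ beg(r''). Then beg(r'') - beg(r') > |r| - p(r) ≥ |r|/2. -/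
variable {α : Type*}

/-- Two distinct maximal repetitions `r'`, `r''` with minimal period `p(r)`
and lengths at least `|r|` satisfy `beg r'' - beg r' > |r| - p(r) ≥ |r|/2`. -/
theorem start_separation (w : ℕ → α) (n i j p a' b' a'' b'' : ℕ)
    (hr : IsMaxRepetition w n i j p)
    (hr' : IsMaxRepetition w n a' b' p) (hr'' : IsMaxRepetition w n a'' b'' p)
    (hlen' : j + 1 - i ≤ b' + 1 - a') (hlen'' : j + 1 - i ≤ b'' + 1 - a'')
    (hne : (a', b') ≠ (a'', b'')) (hle : a' ≤ a'') :
    ((j + 1 - i : ℕ) : ℝ) - p < (a'' : ℝ) - a' ∧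
      ((j + 1 - i : ℕ) : ℝ) / 2 ≤ ((j + 1 - i : ℕ) : ℝ) - p := by
  obtain ⟨hi1, hij, hjn, ⟨⟨hp, hper, hmin⟩, hrep⟩, _, _⟩ := hr
  obtain ⟨ha1', hab', hbn', ⟨⟨_, hper', _⟩, hrep'⟩, hleft', hright'⟩ := hr'
  obtain ⟨ha1'', hab'', hbn'', ⟨⟨_, hper'', _⟩, hrep''⟩, hleft'', hright''⟩ := hr''
  set L := j + 1 - i with hL
  have hL2p : 2 * p ≤ L := by omega
  have h1 : a' + (L - p) < a'' := by
    by_contra h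
    push_neg at h
    have hb' : a'' + p ≤ b' + 1 := by omega
    have hunion : ∀ k, a' ≤ k → (k + p ≤ b' ∨ k + p ≤ b'') → w k = w (k + p) := by
      intro k hk hk2
      rcases le_or_gt (k + p) b' with h' | h'
      · exact hper' k hk h'
      · exact hper'' k (by omega) (by omega)
    have haa : a' = a'' := by
      by_contra hne'
      have h2 : 1 < a'' := by omega
      exact hleft'' h2 (hunion (a'' - 1) (by omega) (by omega))
    have hbb : b' = b'' := by
      by_contra hne'
      rcases Nat.lt_or_ge b' b'' with hlt | hge
      · have heq := hunion (b' + 1 - p) (by omega) (by omega)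
        rw [show b' + 1 - p + p = b' + 1 by omega] at heq
        exact hright' (by omega) heq
      · have heq := hunion (b'' + 1 - p) (by omega) (by omega)
        rw [show b'' + 1 - p + p = b'' + 1 by omega] at heq
        exact hright'' (by omega) heq
    exact hne (by simp [haa, hbb])
  have hpL : p ≤ L := by omega
  constructor
  · have hc : ((a' + (L - p) : ℕ) : ℝ) < ((a'' : ℕ) : ℝ) := by exact_mod_cast h1
    push_cast at hc
    rw [Nat.cast_sub hpL] at hc
    push_cast at hc
    linarith
  · have hc : ((2 * p : ℕ) : ℝ) ≤ (L : ℝ) := by exact_mod_cast hL2p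
    push_cast at hc
    linarith
end

section
/- Let r be a maximal repetition in w. The number of maximal repetitions r' with minimal period p(r), |r'| ≥ |r|, and lb_g(r) ≤ beg(r') ≤ ub_f(r) is at most 1 + (ub_f(r) - lb_g(r))/(|r|/2), which is O(1 + Δ_{f,g} + ∂_{f,g}). -/
variable {α : Type*}

/-!
Two maximal repetitions of period `p` that overlap in at least `p` positions coincide: the
period of one would otherwise extend the other by a letter. Hence the repetitions counted, all
longer than `|r| > 2p`, begin more than `|r|/2` apart, and at most `1 + (U - L)/(|r|/2)` starts
fit into `[L, U]`. Finally `U - L` is the spread of `x + f x` against `y + g y` over lengths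
`x, y < |r|`, which the increment bounds on `f`, `g` and the ratio bound `Δ` control by
`|r| (1 + Δ + max Df Dg)`.
-/

namespace IsMaxRepetition

variable {w : ℕ → α} {n p : ℕ}

theorem begin_eq_of_overlap {i₁ j₁ i₂ j₂ : ℕ} (h₁ : IsMaxRepetition w n i₁ j₁ p)
    (h₂ : IsMaxRepetition w n i₂ j₂ p) (hle : i₁ ≤ i₂) (hov : i₂ + p ≤ j₁ + 1) : i₁ = i₂ := by
  by_contra hne
  have hi₁ : 1 ≤ i₁ := h₁.1
  exact h₂.2.2.2.2.1 (by omega) (h₁.2.2.2.1.1.2.1 (i₂ - 1) (by omega) (by omega))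

theorem end_le_of_begin_eq {i j₁ j₂ : ℕ} (h₁ : IsMaxRepetition w n i j₁ p)
    (h₂ : IsMaxRepetition w n i j₂ p) : j₂ ≤ j₁ := by
  by_contra! hlt
  have hlen : i + 2 * p ≤ j₁ + 1 := h₁.2.2.2.1.2
  have hj₂ : j₂ ≤ n := h₂.2.2.1
  have hper := h₂.2.2.2.1.1.2.1 (j₁ + 1 - p) (by omega) (by omega)
  rw [Nat.sub_add_cancel (by omega)] at hper
  exact h₁.2.2.2.2.2 (by omega) hper

theorem end_eq_of_begin_eq {i j₁ j₂ : ℕ} (h₁ : IsMaxRepetition w n i j₁ p)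
    (h₂ : IsMaxRepetition w n i j₂ p) : j₁ = j₂ :=
  le_antisymm (end_le_of_begin_eq h₂ h₁) (end_le_of_begin_eq h₁ h₂)

theorem half_lt_begin_sub {i₁ j₁ i₂ j₂ ℓ : ℕ} (h₁ : IsMaxRepetition w n i₁ j₁ p)
    (h₂ : IsMaxRepetition w n i₂ j₂ p) (hℓ : 2 * p < ℓ) (hlen : ℓ ≤ j₁ + 1 - i₁)
    (hlt : i₁ < i₂) : (ℓ : ℝ) / 2 < (i₂ : ℝ) - i₁ := by
  by_contra! hclose
  have hclose' : 2 * i₂ ≤ ℓ + 2 * i₁ := by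
    exact_mod_cast (by linarith : (2 * i₂ : ℝ) ≤ ℓ + 2 * i₁)
  have hij : i₁ ≤ j₁ := h₁.2.1
  exact hlt.ne (begin_eq_of_overlap h₁ h₂ hlt.le (by omega))

end IsMaxRepetition

theorem Finset.card_le_one_add_div_of_separated {K : Type*} [Field K] [LinearOrder K]
    [IsStrictOrderedRing K] (T : Finset K) {L U d : K} (hd : 0 < d) (hLU : L ≤ U)
    (hT : ∀ a ∈ T, a ∈ Set.Icc L U) (hsep : ∀ a ∈ T, ∀ b ∈ T, a < b → d < b - a) :
    (T.card : K) ≤ 1 + (U - L) / d := by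
  classical
  induction T using Finset.induction_on_max generalizing U with
  | empty => simp only [card_empty, Nat.cast_zero]; linarith [div_nonneg (sub_nonneg.2 hLU) hd.le]
  | insert a T hlt ih =>
    have haU : a ≤ U := (hT a (mem_insert_self a T)).2
    have hTU : ∀ x ∈ T, x ∈ Set.Icc L (U - d) := fun x hx =>
      ⟨(hT x (mem_insert_of_mem hx)).1,
        by linarith [hsep x (mem_insert_of_mem hx) a (mem_insert_self a T) (hlt x hx)]⟩
    rw [card_insert_of_notMem fun ha => (hlt a ha).false, Nat.cast_succ]
    rcases T.eq_empty_or_nonempty with rfl | ⟨x, hx⟩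
    · simp only [card_empty, Nat.cast_zero]; linarith [div_nonneg (sub_nonneg.2 hLU) hd.le]
    · have hcard := ih ((hTU x hx).1.trans (hTU x hx).2) hTU
        fun a ha b hb => hsep a (mem_insert_of_mem ha) b (mem_insert_of_mem hb)
      calc (T.card : K) + 1 ≤ 1 + (U - d - L) / d + 1 := by linarith
        _ = 1 + (U - L) / d := by field_simp; ring

theorem Set.ncard_le_one_add_div_of_separated {K : Type*} [Field K] [LinearOrder K]
    [IsStrictOrderedRing K] {s : Set K} {L U d : K} (hd : 0 < d) (hLU : L ≤ U)
    (hs : s ⊆ Set.Icc L U) (hsep : ∀ a ∈ s, ∀ b ∈ s, a < b → d < b - a) :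
    (s.ncard : K) ≤ 1 + (U - L) / d := by
  obtain hfin | hinf := s.finite_or_infinite
  · rw [ncard_eq_toFinset_card s hfin]
    exact Finset.card_le_one_add_div_of_separated _ hd hLU (fun a ha => hs (by simpa using ha))
      (by simpa using hsep)
  · rw [hinf.ncard, Nat.cast_zero]
    linarith [div_nonneg (sub_nonneg.2 hLU) hd.le]

section Increments

variable {f g : ℕ → ℝ} {Df Dg Δ : ℝ}

theorem sub_le_mul_sub_of_succ_sub_le (hf : ∀ x, f (x + 1) - f x ≤ Df) {x y : ℕ}
    (hxy : x ≤ y) : f y - f x ≤ Df * ((y : ℝ) - x) := by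
  induction y, hxy using Nat.le_induction with
  | base => simp
  | succ m _ ih => push_cast; linarith [hf m]

theorem sub_le_of_bounded_increments (hf : ∀ x, f (x + 1) - f x ≤ Df)
    (hg : ∀ x, g x - g (x + 1) ≤ Dg) (hΔ : ∀ x : ℕ, 0 < x → (f x - g x) / x ≤ Δ)
    {x y : ℕ} (hx : 0 < x) (hy : 0 < y) :
    f y - g x ≤ Δ * min (x : ℝ) y + max Df Dg * |(y : ℝ) - x| := by
  have hratio : ∀ z : ℕ, 0 < z → f z - g z ≤ Δ * z := fun z hz =>
    (div_le_iff₀ (by exact_mod_cast hz)).1 (hΔ z hz)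
  rcases le_total x y with hxy | hyx
  · have hxyR : (x : ℝ) ≤ y := by exact_mod_cast hxy
    have hstep := sub_le_mul_sub_of_succ_sub_le hf hxy
    rw [min_eq_left hxyR, abs_of_nonneg (sub_nonneg.2 hxyR)]
    nlinarith [hratio x hx, le_max_left Df Dg]
  · have hyxR : (y : ℝ) ≤ x := by exact_mod_cast hyx
    have hstep := sub_le_mul_sub_of_succ_sub_le (f := fun z => -g z) (Df := Dg)
      (fun z => by linarith [hg z]) hyx
    rw [min_eq_right hyxR, abs_of_nonpos (sub_nonpos.2 hyxR)]
    nlinarith [hratio y hy, le_max_right Df Dg]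

theorem sup'_sub_inf'_le {s : Finset ℕ} (hs : s.Nonempty) {ℓ : ℕ} (hpos : ∀ x ∈ s, 0 < x)
    (hle : ∀ x ∈ s, x ≤ ℓ) (hf : ∀ x, f (x + 1) - f x ≤ Df)
    (hg : ∀ x, g x - g (x + 1) ≤ Dg) (hΔ : ∀ x : ℕ, 0 < x → (f x - g x) / x ≤ Δ)
    (hΔ₀ : 0 ≤ Δ) (hD₀ : 0 ≤ max Df Dg) :
    s.sup' hs (fun x => (x : ℝ) + f x) - s.inf' hs (fun x => (x : ℝ) + g x) ≤
      ℓ * (1 + Δ + max Df Dg) := by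
  obtain ⟨y, hy, hsup⟩ := s.exists_mem_eq_sup' hs fun x => (x : ℝ) + f x
  obtain ⟨x, hx, hinf⟩ := s.exists_mem_eq_inf' hs fun x => (x : ℝ) + g x
  have hxℓ : (x : ℝ) ≤ ℓ := by exact_mod_cast hle x hx
  have hyℓ : (y : ℝ) ≤ ℓ := by exact_mod_cast hle y hy
  have hmin : min (x : ℝ) y ≤ ℓ := (min_le_left _ _).trans hxℓ
  have habs : |(y : ℝ) - x| ≤ ℓ := abs_sub_le_iff.2 ⟨by linarith [x.cast_nonneg (α := ℝ)],
    by linarith [y.cast_nonneg (α := ℝ)]⟩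
  rw [hsup, hinf]
  nlinarith [sub_le_of_bounded_increments hf hg hΔ (hpos x hx) (hpos y hy),
    mul_le_mul_of_nonneg_left hmin hΔ₀, mul_le_mul_of_nonneg_left habs hD₀,
    le_abs_self ((y : ℝ) - x)]

end Increments

/-- The number of maximal repetitions `r'` with minimal period `p(r)`, length
at least `|r|`, and `lb_g(r) ≤ beg r' ≤ ub_f(r)` is at most
`1 + (ub_f(r) - lb_g(r))/(|r|/2)`, which is `O(1 + Δ + ∂)`. -/
theorem generating_repetitions_count (w : ℕ → α) (n i j p : ℕ)
    (f g : ℕ → ℝ) (Df Dg Δ : ℝ)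
    (hr : IsMaxRepetition w n i j p)
    (h2p : 2 * p < j + 1 - i)
    (hfg : ∀ x, g x ≤ f x)
    (hDf : ∀ x, max (f (x + 1) - f x) 0 ≤ Df)
    (hDg : ∀ x, max (g x - g (x + 1)) 0 ≤ Dg)
    (hΔ : ∀ x, 0 < x → (f x - g x) / x ≤ Δ) :
    let hne : (Finset.Ico (2 * p) (j + 1 - i)).Nonempty :=
      Finset.nonempty_Ico.mpr h2p
    let L : ℝ :=
      (i : ℝ) + (Finset.Ico (2 * p) (j + 1 - i)).inf' hne fun x => (x : ℝ) + g x
    let U : ℝ :=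
      (i : ℝ) + (Finset.Ico (2 * p) (j + 1 - i)).sup' hne fun x => (x : ℝ) + f x
    let S : Set (ℕ × ℕ) := {ab | IsMaxRepetition w n ab.1 ab.2 p ∧
      j + 1 - i ≤ ab.2 + 1 - ab.1 ∧ L ≤ (ab.1 : ℝ) ∧ (ab.1 : ℝ) ≤ U}
    (S.ncard : ℝ) ≤ 1 + (U - L) / (((j + 1 - i : ℕ) : ℝ) / 2) ∧
      (S.ncard : ℝ) ≤ 3 + 2 * (Δ + max Df Dg) := by
  intro hne L U S
  set ℓ := j + 1 - i
  have hp : 0 < p := hr.2.2.2.1.1.1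
  have hℓ : (0 : ℝ) < ℓ / 2 := half_pos (Nat.cast_pos.2 (by omega))
  have hΔ₀ : 0 ≤ Δ := by linarith [hfg 1, show f 1 - g 1 ≤ Δ by simpa using hΔ 1 one_pos]
  have hD₀ : 0 ≤ max Df Dg := ((le_max_right _ _).trans (hDf 0)).trans (le_max_left _ _)
  obtain ⟨x, hx⟩ := hne
  have hLU : L ≤ U := by
    have := ((Finset.inf'_le (fun y : ℕ => (y : ℝ) + g y) hx).trans
      (by linarith [hfg x])).trans (Finset.le_sup' (fun y : ℕ => (y : ℝ) + f y) hx)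
    simp only [L, U]; linarith
  have hwidth : U - L ≤ ℓ * (1 + Δ + max Df Dg) := by
    have := sup'_sub_inf'_le hne (fun x hx => by have := (Finset.mem_Ico.1 hx).1; omega)
      (fun x hx => (Finset.mem_Ico.1 hx).2.le) (fun x => (le_max_left _ _).trans (hDf x))
      (fun x => (le_max_left _ _).trans (hDg x)) hΔ hΔ₀ hD₀
    simp only [L, U]; linarith
  have hinj : S.InjOn fun ab => (ab.1 : ℝ) := fun a ha b hb hab => by
    have hab : a.1 = b.1 := Nat.cast_injective hab
    have hb' : IsMaxRepetition w n a.1 b.2 p := hab ▸ hb.1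
    exact Prod.ext hab (IsMaxRepetition.end_eq_of_begin_eq ha.1 hb')
  have hcount : (S.ncard : ℝ) ≤ 1 + (U - L) / (ℓ / 2) := by
    rw [← hinj.ncard_image]
    refine Set.ncard_le_one_add_div_of_separated hℓ hLU ?_ ?_
    · rintro _ ⟨ab, hab, rfl⟩
      exact hab.2.2
    · rintro _ ⟨a, ha, rfl⟩ _ ⟨b, hb, rfl⟩ hab
      exact IsMaxRepetition.half_lt_begin_sub ha.1 hb.1 h2p ha.2.1 (Nat.cast_lt.1 hab)
  refine ⟨hcount, hcount.trans ?_⟩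
  have : (U - L) / (ℓ / 2) ≤ 2 * (1 + Δ + max Df Dg) := by
    rw [div_le_iff₀ hℓ]; linarith
  linarith
end

section
/- Let r' and r'' be maximal repetitions in w. There is at most one maximal gapped repeat σ = (u', u'') such that the longest periodic prefix π' of u' satisfies end(π') = end(r') and the longest periodic prefix π'' of u'' satisfies end(π'') = end(r''). (I.e., σ is uniquely determined by r' and r''.) -/
variable {α : Type*}

/-- The longest periodic prefix of the copy `w[s..s+c-1]` ends at position `e`. -/
def LongestPeriodicPrefixEndsAt (w : ℕ → α) (s c e : ℕ) : Prop :=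
  ∃ l, 0 < l ∧ l ≤ c ∧ s + l - 1 = e ∧ (∃ q, IsRepetition w s (s + l - 1) q) ∧
    ∀ l', l < l' → l' ≤ c → ¬∃ q, IsRepetition w s (s + l' - 1) q

lemma hasPeriod_transfer (w : ℕ → α) (s t c l q : ℕ)
    (hm : ∀ k, k < c → w (s + k) = w (t + k)) (hl : 0 < l) (hlc : l ≤ c)
    (h : HasPeriod w s (s + l - 1) q) : HasPeriod w t (t + l - 1) q := by
  intro k hk hkq
  obtain ⟨j, rfl⟩ : ∃ j, k = t + j := ⟨k - t, by omega⟩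
  have h1 : j < c := by omega
  have h2 : j + q < c := by omega
  have h3 := h (s + j) (by omega) (by omega)
  calc w (t + j) = w (s + j) := (hm j h1).symm
    _ = w (s + j + q) := h3
    _ = w (s + (j + q)) := by ring_nf
    _ = w (t + (j + q)) := hm (j + q) h2
    _ = w (t + j + q) := by ring_nf

lemma rep_transfer (w : ℕ → α) (s t c l : ℕ)
    (hm : ∀ k, k < c → w (s + k) = w (t + k)) (hl : 0 < l) (hlc : l ≤ c)
    (h : ∃ q, IsRepetition w s (s + l - 1) q) :
    ∃ q, IsRepetition w t (t + l - 1) q := by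
  obtain ⟨q, ⟨hq, hp, hmin⟩, hlen⟩ := h
  have hm' : ∀ k, k < c → w (t + k) = w (s + k) := fun k hk => (hm k hk).symm
  refine ⟨q, ⟨hq, hasPeriod_transfer w s t c l q hm hl hlc hp, ?_⟩, by omega⟩
  intro q' h0 hq'
  exact hmin q' h0 (hasPeriod_transfer w t s c l q' hm' hl hlc hq')

lemma lpp_length_eq (w : ℕ → α) (s t c b1 b2 : ℕ)
    (hm : ∀ k, k < c → w (s + k) = w (t + k))
    (h1 : LongestPeriodicPrefixEndsAt w s c b1)
    (h2 : LongestPeriodicPrefixEndsAt w t c b2) :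
    ∃ l, 0 < l ∧ l ≤ c ∧ s + l - 1 = b1 ∧ t + l - 1 = b2 := by
  obtain ⟨l1, hl1, hl1c, he1, hr1, hmax1⟩ := h1
  obtain ⟨l2, hl2, hl2c, he2, hr2, hmax2⟩ := h2
  have hm' : ∀ k, k < c → w (t + k) = w (s + k) := fun k hk => (hm k hk).symm
  have hle : l1 = l2 := by
    rcases lt_trichotomy l1 l2 with h | h | h
    · exact absurd (rep_transfer w t s c l2 hm' hl2 hl2c hr2) (hmax1 l2 h hl2c)
    · exact h
    · exact absurd (rep_transfer w s t c l1 hm hl1 hl1c hr1) (hmax2 l1 h hl1c)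
  subst hle
  exact ⟨l1, hl1, hl1c, he1, he2⟩

lemma stepA (w : ℕ → α) (n b1 b2 s1 t1 c1 l1 s2 t2 c2 l2 : ℕ)
    (e1 : s1 + l1 = b1 + 1) (e2 : t1 + l1 = b2 + 1)
    (e3 : s2 + l2 = b1 + 1) (e4 : t2 + l2 = b2 + 1)
    (hl1c : l1 ≤ c1) (hl2c : l2 ≤ c2) (hl2 : 0 < l2)
    (hm2 : ∀ k, k < c2 → w (s2 + k) = w (t2 + k))
    (hn2 : t2 + c2 - 1 ≤ n)
    (hR1 : t1 + c1 - 1 < n → w (s1 + c1) ≠ w (t1 + c1))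
    (hlt : c1 - l1 < c2 - l2) : False := by
  have hend : t1 + c1 - 1 < n := by omega
  apply hR1 hend
  have hk : l2 + (c1 - l1) < c2 := by omega
  have h := hm2 (l2 + (c1 - l1)) hk
  have e5 : s2 + (l2 + (c1 - l1)) = s1 + c1 := by omega
  have e6 : t2 + (l2 + (c1 - l1)) = t1 + c1 := by omega
  rw [e5, e6] at h
  exact h

lemma stepB (w : ℕ → α) (b1 b2 s1 t1 c1 l1 s2 t2 c2 l2 : ℕ)
    (e1 : s1 + l1 = b1 + 1) (e2 : t1 + l1 = b2 + 1)
    (e3 : s2 + l2 = b1 + 1) (e4 : t2 + l2 = b2 + 1)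
    (hl2c : l2 ≤ c2) (hs2 : 1 ≤ s2)
    (hm2 : ∀ k, k < c2 → w (s2 + k) = w (t2 + k))
    (hL1 : 1 < s1 → w (s1 - 1) ≠ w (t1 - 1))
    (hlt : l1 < l2) : False := by
  have hs1 : 1 < s1 := by omega
  apply hL1 hs1
  have hk : l2 - l1 - 1 < c2 := by omega
  have h := hm2 (l2 - l1 - 1) hk
  have e5 : s2 + (l2 - l1 - 1) = s1 - 1 := by omega
  have e6 : t2 + (l2 - l1 - 1) = t1 - 1 := by omega
  rw [e5, e6] at h
  exact h

/-- A maximal gapped repeat whose copies' longest periodic prefixes end exactly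
at the ends of given maximal repetitions `r'`, `r''` is determined uniquely by
`r'` and `r''`. -/
theorem unique_semiperiodic_repeat (w : ℕ → α) (n p' p'' a' b' a'' b'' : ℕ)
    (hr' : IsMaxRepetition w n a' b' p') (hr'' : IsMaxRepetition w n a'' b'' p'')
    (s1 t1 c1 s2 t2 c2 : ℕ)
    (h1 : IsMaxGappedRepeat w n s1 t1 c1)
    (h2 : IsMaxGappedRepeat w n s2 t2 c2)
    (h1l : LongestPeriodicPrefixEndsAt w s1 c1 b')
    (h1r : LongestPeriodicPrefixEndsAt w t1 c1 b'')
    (h2l : LongestPeriodicPrefixEndsAt w s2 c2 b')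
    (h2r : LongestPeriodicPrefixEndsAt w t2 c2 b'') :
    s1 = s2 ∧ t1 = t2 ∧ c1 = c2 := by
  obtain ⟨⟨hc1, hgap1, hm1⟩, hs1, hn1, hL1, hR1⟩ := h1
  obtain ⟨⟨hc2, hgap2, hm2⟩, hs2, hn2, hL2, hR2⟩ := h2
  obtain ⟨l1, hl1, hl1c, hb1, hb1'⟩ := lpp_length_eq w s1 t1 c1 b' b'' hm1 h1l h1r
  obtain ⟨l2, hl2, hl2c, hb2, hb2'⟩ := lpp_length_eq w s2 t2 c2 b' b'' hm2 h2l h2r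
  have e1 : s1 + l1 = b' + 1 := by omega
  have e2 : t1 + l1 = b'' + 1 := by omega
  have e3 : s2 + l2 = b' + 1 := by omega
  have e4 : t2 + l2 = b'' + 1 := by omega
  have hmeq : c1 - l1 = c2 - l2 := by
    rcases lt_trichotomy (c1 - l1) (c2 - l2) with h | h | h
    · exact absurd (stepA w n b' b'' s1 t1 c1 l1 s2 t2 c2 l2 e1 e2 e3 e4 hl1c hl2c hl2
        hm2 hn2 hR1 h) (not_false)
    · exact h
    · exact absurd (stepA w n b' b'' s2 t2 c2 l2 s1 t1 c1 l1 e3 e4 e1 e2 hl2c hl1c hl1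
        hm1 hn1 hR2 h) (not_false)
  have hleq : l1 = l2 := by
    rcases lt_trichotomy l1 l2 with h | h | h
    · exact absurd (stepB w b' b'' s1 t1 c1 l1 s2 t2 c2 l2 e1 e2 e3 e4 hl2c hs2
        hm2 hL1 h) (not_false)
    · exact h
    · exact absurd (stepB w b' b'' s2 t2 c2 l2 s1 t1 c1 l1 e3 e4 e1 e2 hl1c hs1
        hm1 hL2 h) (not_false)
  refine ⟨by omega, by omega, by omega⟩
end

section
/- Let σ1 = (u'_1, u''_1) and σ2 = (u'_2, u''_2) be two distinct maximal gapped repeats in w with copy lengths c1 = |u'_1| ≤ c2 = |u'_2| ≤ (3/2)c1, such that u'_1, u'_2 are strongly overlapped and u''_1, u''_2 are strongly overlapped. Then at least one of σ1, σ2 is not ordinary: one of them has a copy with a periodic suffix of length at least 5/6 of the copy length, or a copy that is itself a repetition. -/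
variable {α : Type*}

/-- Two factors (given by start positions and lengths) are strongly overlapped. -/
def StronglyOverlapped (s1 c1 s2 c2 : ℕ) : Prop :=
  (s1 ≤ s2 ∧ 6 * (s2 - s1) ≤ c1) ∨ (s2 ≤ s1 ∧ 6 * (s1 - s2) ≤ c2)

/-- The copy `w[s..s+c-1]` has a periodic suffix of length at least `(5/6)c`. -/
def HasLongPeriodicSuffix (w : ℕ → α) (s c : ℕ) : Prop :=
  ∃ l q, 0 < q ∧ l ≤ c ∧ 5 * c ≤ 6 * l ∧ IsRepetition w (s + c - l) (s + c - 1) q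

/-- Evidence that a maximal gapped repeat `(s, t, c)` is not ordinary: one of
its copies is a repetition, or has a periodic suffix of length `≥ (5/6)` of
the copy length. -/
def NotOrdinaryEvidence (w : ℕ → α) (s t c : ℕ) : Prop :=
  (∃ q, IsRepetition w s (s + c - 1) q) ∨ (∃ q, IsRepetition w t (t + c - 1) q) ∨
    HasLongPeriodicSuffix w s c ∨ HasLongPeriodicSuffix w t c


/-- A factor with a positive period is a repetition for its *minimal* period,
provided its length is at least twice the given period. -/
lemma exists_isRepetition_of_hasPeriod {w : ℕ → α} {X Y d : ℕ} (hd : 0 < d)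
    (hp : HasPeriod w X Y d) (h2 : X + 2 * d ≤ Y + 1) :
    ∃ q, 0 < q ∧ IsRepetition w X Y q := by
  classical
  have hex : ∃ q, 0 < q ∧ HasPeriod w X Y q := ⟨d, hd, hp⟩
  have hmin : Nat.find hex ≤ d := Nat.find_min' hex ⟨hd, hp⟩
  obtain ⟨hq0, hqp⟩ := Nat.find_spec hex
  exact ⟨Nat.find hex, hq0,
    ⟨⟨hq0, hqp, fun q hq hq' => Nat.find_min' hex ⟨hq, hq'⟩⟩, by omega⟩⟩

/-- Key case: two gapped repeats with strongly overlapped copies and distinct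
periods `p1 < p2` force a long periodic suffix on one of the right copies. -/
lemma aux_hls (w : ℕ → α) (s1 t1 c1 s2 t2 c2 : ℕ)
    (hrep1 : ∀ k, k < c1 → w (s1 + k) = w (t1 + k))
    (hrep2 : ∀ k, k < c2 → w (s2 + k) = w (t2 + k))
    (hgap1 : s1 + c1 < t1) (hgap2 : s2 + c2 < t2)
    (hc1 : 0 < c1) (hc2 : 0 < c2)
    (hcc1 : 2 * c1 ≤ 3 * c2) (hcc2 : 2 * c2 ≤ 3 * c1)
    (ho1 : StronglyOverlapped s1 c1 s2 c2)
    (ho2 : StronglyOverlapped t1 c1 t2 c2)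
    (hlt : t1 + s2 < t2 + s1) :
    HasLongPeriodicSuffix w t1 c1 ∨ HasLongPeriodicSuffix w t2 c2 := by
  have hd : 6 * s2 ≤ 6 * s1 + c1 ∧ 6 * s1 ≤ 6 * s2 + c2 := by
    rcases ho1 with ⟨h, h'⟩ | ⟨h, h'⟩ <;> omega
  have he : 6 * t2 ≤ 6 * t1 + c1 ∧ 6 * t1 ≤ 6 * t2 + c2 := by
    rcases ho2 with ⟨h, h'⟩ | ⟨h, h'⟩ <;> omega
  set d : ℕ := t2 + s1 - (t1 + s2) with hd_def
  have hdpos : 0 < d := by omega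
  -- the overlap of the two left copies, shifted by the periods, is d-periodic
  have key : ∀ y, max s1 s2 + (t1 - s1) ≤ y →
      y + d ≤ min (s1 + c1) (s2 + c2) + (t2 - s2) - 1 → w y = w (y + d) := by
    intro y hy1 hy2
    set k := y + s1 - t1 with hk
    have hks1 : s1 ≤ k := by omega
    have hks2 : s2 ≤ k := by omega
    have hkc1 : k < s1 + c1 := by omega
    have hkc2 : k < s2 + c2 := by omega
    have e1 := hrep1 (k - s1) (by omega)
    have e2 := hrep2 (k - s2) (by omega)
    have i1 : s1 + (k - s1) = k := by omega
    have i2 : t1 + (k - s1) = y := by omega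
    have i3 : s2 + (k - s2) = k := by omega
    have i4 : t2 + (k - s2) = y + d := by omega
    rw [i1, i2] at e1
    rw [i3, i4] at e2
    exact e1.symm.trans e2
  -- small period: 6d ≤ c1 + c2
  have hdsmall : 6 * d ≤ c1 + c2 := by omega
  by_cases hF : s1 + c1 ≤ s2 + c2
  · -- the suffix of the right copy of the first repeat is periodic
    left
    set X := max s1 s2 + (t1 - s1) with hX
    have hXle : X + 2 * d ≤ t1 + c1 - 1 + 1 := by omega
    have hper : HasPeriod w X (t1 + c1 - 1) d := by
      intro k hk hk'
      exact key k hk (by omega)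
    obtain ⟨q, hq0, hq⟩ := exists_isRepetition_of_hasPeriod hdpos hper hXle
    refine ⟨t1 + c1 - X, q, hq0, by omega, by omega, ?_⟩
    have hXeq : t1 + c1 - (t1 + c1 - X) = X := by omega
    rw [hXeq]
    exact hq
  · -- the suffix of the right copy of the second repeat is periodic
    right
    set X := max (max s1 s2 + (t1 - s1)) t2 with hX
    have hXle : X + 2 * d ≤ t2 + c2 - 1 + 1 := by omega
    have hper : HasPeriod w X (t2 + c2 - 1) d := by
      intro k hk hk'
      exact key k (by omega) (by omega)
    obtain ⟨q, hq0, hq⟩ := exists_isRepetition_of_hasPeriod hdpos hper hXle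
    refine ⟨t2 + c2 - X, q, hq0, by omega, by omega, ?_⟩
    have hXeq : t2 + c2 - (t2 + c2 - X) = X := by omega
    rw [hXeq]
    exact hq

/-- If two distinct maximal gapped repeats have `c1 ≤ c2 ≤ (3/2)c1`, strongly
overlapped left copies, and strongly overlapped right copies, then at least
one of them is not ordinary. -/
theorem not_both_ordinary (w : ℕ → α) (n s1 t1 c1 s2 t2 c2 : ℕ)
    (h1 : IsMaxGappedRepeat w n s1 t1 c1) (h2 : IsMaxGappedRepeat w n s2 t2 c2)
    (hne : (s1, t1, c1) ≠ (s2, t2, c2))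
    (hc : c1 ≤ c2) (hc2 : 2 * c2 ≤ 3 * c1)
    (ho1 : StronglyOverlapped s1 c1 s2 c2)
    (ho2 : StronglyOverlapped t1 c1 t2 c2) :
    NotOrdinaryEvidence w s1 t1 c1 ∨ NotOrdinaryEvidence w s2 t2 c2 := by
  obtain ⟨⟨hc1p, hgap1, hrep1⟩, hs1, hn1, hL1, hR1⟩ := h1
  obtain ⟨⟨hc2p, hgap2, hrep2⟩, hs2, hn2, hL2, hR2⟩ := h2
  rcases Nat.lt_trichotomy (t1 + s2) (t2 + s1) with hlt | heq | hgt
  · -- p1 < p2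
    rcases aux_hls w s1 t1 c1 s2 t2 c2 hrep1 hrep2 hgap1 hgap2 hc1p hc2p
        (by omega) hc2 ho1 ho2 hlt with h | h
    · exact Or.inl (Or.inr (Or.inr (Or.inr h)))
    · exact Or.inr (Or.inr (Or.inr (Or.inr h)))
  · -- equal periods: contradiction with maximality
    exfalso
    rcases Nat.lt_trichotomy s1 s2 with h | h | h
    · have h6 : 6 * (s2 - s1) ≤ c1 := by
        rcases ho1 with ⟨_, hb⟩ | ⟨hb, _⟩ <;> omega
      have hk := hrep1 (s2 - 1 - s1) (by omega)
      have i1 : s1 + (s2 - 1 - s1) = s2 - 1 := by omega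
      have i2 : t1 + (s2 - 1 - s1) = t2 - 1 := by omega
      rw [i1, i2] at hk
      exact hL2 (by omega) hk
    · have ht : t1 = t2 := by omega
      have hcne : c1 ≠ c2 := by
        intro hcc
        exact hne (by rw [h, ht, hcc])
      have hclt : c1 < c2 := lt_of_le_of_ne hc hcne
      have hk := hrep2 c1 hclt
      rw [← h, ← ht] at hk
      exact hR1 (by omega) hk
    · have h6 : 6 * (s1 - s2) ≤ c2 := by
        rcases ho1 with ⟨hb, _⟩ | ⟨_, hb⟩ <;> omega
      have hk := hrep2 (s1 - 1 - s2) (by omega)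
      have i1 : s2 + (s1 - 1 - s2) = s1 - 1 := by omega
      have i2 : t2 + (s1 - 1 - s2) = t1 - 1 := by omega
      rw [i1, i2] at hk
      exact hL1 (by omega) hk
  · -- p2 < p1: apply the key lemma with the roles swapped
    rcases aux_hls w s2 t2 c2 s1 t1 c1 hrep2 hrep1 hgap2 hgap1 hc2p hc1p
        hc2 (by omega) ho1.symm ho2.symm hgt with h | h
    · exact Or.inr (Or.inr (Or.inr (Or.inr h)))
    · exact Or.inl (Or.inr (Or.inr (Or.inr h)))
end

section
/- Let σ1 and σ2 be two maximal gapped repeats in w with equal periods p(σ1) = p(σ2) whose left copies overlap (as intervals). Then σ1 = σ2; equivalently, distinct maximal gapped repeats with overlapping left copies have distinct periods. -/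
variable {α : Type*}

/-- Two maximal gapped repeats with equal periods `t - s` and overlapping left
copies coincide. -/
theorem equal_period_overlap (w : ℕ → α) (n s1 t1 c1 s2 t2 c2 : ℕ)
    (h1 : IsMaxGappedRepeat w n s1 t1 c1) (h2 : IsMaxGappedRepeat w n s2 t2 c2)
    (hp : t1 - s1 = t2 - s2)
    (hov : s1 ≤ s2 + c2 - 1 ∧ s2 ≤ s1 + c1 - 1) :
    s1 = s2 ∧ t1 = t2 ∧ c1 = c2 := by
  obtain ⟨⟨hc1, hg1, hrep1⟩, hs1, hn1, hL1, hR1⟩ := h1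
  obtain ⟨⟨hc2, hg2, hrep2⟩, hs2, hn2, hL2, hR2⟩ := h2
  obtain ⟨hov1, hov2⟩ := hov
  -- s2 ≤ s1
  have hA : s2 ≤ s1 := by
    by_contra h
    push_neg at h
    have h12 : 1 < s2 := by omega
    have hk : s2 - 1 - s1 < c1 := by omega
    have := hrep1 (s2 - 1 - s1) hk
    have e1 : s1 + (s2 - 1 - s1) = s2 - 1 := by omega
    have e2 : t1 + (s2 - 1 - s1) = t2 - 1 := by omega
    rw [e1, e2] at this
    exact hL2 h12 this
  have hB : s1 ≤ s2 := by
    by_contra h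
    push_neg at h
    have h12 : 1 < s1 := by omega
    have hk : s1 - 1 - s2 < c2 := by omega
    have := hrep2 (s1 - 1 - s2) hk
    have e1 : s2 + (s1 - 1 - s2) = s1 - 1 := by omega
    have e2 : t2 + (s1 - 1 - s2) = t1 - 1 := by omega
    rw [e1, e2] at this
    exact hL1 h12 this
  have hs : s1 = s2 := le_antisymm hB hA
  have ht : t1 = t2 := by omega
  refine ⟨hs, ht, ?_⟩
  by_contra hc
  rcases Nat.lt_or_ge c1 c2 with h | h
  · have hend : t1 + c1 - 1 < n := by omega
    have := hrep2 c1 h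
    have e1 : s2 + c1 = s1 + c1 := by omega
    have e2 : t2 + c1 = t1 + c1 := by omega
    rw [e1, e2] at this
    exact hR1 hend this
  · have hlt : c2 < c1 := by omega
    have hend : t2 + c2 - 1 < n := by omega
    have := hrep1 c2 hlt
    have e1 : s1 + c2 = s2 + c2 := by omega
    have e2 : t1 + c2 = t2 + c2 := by omega
    rw [e1, e2] at this
    exact hR2 hend this
end

section
/- Suppose ∂⁺_f and ∂⁻_g exist. If a point (i, j, c) is covered from above by a point (i', j', c') representing an f,g-gapped repeat (so i' + c' + g(c') ≤ j' ≤ i' + c' + f(c')), then i + (5/6)c + g(c) - (c/2)·∂⁻_g ≤ j ≤ i + (7/4)c + f(c) + (c/2)·∂⁺_f. -/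
variable {α : Type*}

lemma telescope_upper (h : ℕ → ℝ) (D : ℝ) (hD : ∀ x, max (h (x + 1) - h x) 0 ≤ D)
    (a b : ℕ) (hab : a ≤ b) : h b - h a ≤ D * (b - a) := by
  induction b with
  | zero => simp_all
  | succ n ih =>
    rcases Nat.lt_or_ge a (n+1) with hlt | hge
    · have h1 := ih (Nat.lt_succ_iff.mp hlt)
      have h2 : h (n+1) - h n ≤ D := le_trans (le_max_left _ _) (hD n)
      push_cast
      push_cast at h1
      nlinarith
    · have : a = n + 1 := le_antisymm hab hge
      subst this; simp

/-- If a point `(i, j, c)` is covered from above by a point `(i', j', c')`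
satisfying the `f,g`-gap condition, then
`i + (5/6)c + g c - (c/2)∂⁻_g ≤ j ≤ i + (7/4)c + f c + (c/2)∂⁺_f`. -/
theorem covered_from_above_bounds (f g : ℕ → ℝ) (Df Dg : ℝ)
    (hDf : ∀ x, max (f (x + 1) - f x) 0 ≤ Df)
    (hDg : ∀ x, max (g x - g (x + 1)) 0 ≤ Dg)
    (i j c i' j' c' : ℕ)
    (hpos : 0 < i ∧ 0 < j ∧ 0 < c ∧ 0 < i' ∧ 0 < j' ∧ 0 < c')
    (hi : i' ≤ i ∧ (i : ℝ) ≤ i' + c' / 6)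
    (hj : j' ≤ j ∧ (j : ℝ) ≤ j' + c' / 6)
    (hc : (2 : ℝ) / 3 * c' ≤ c ∧ c ≤ c')
    (hgap : (i' : ℝ) + c' + g c' ≤ j' ∧ (j' : ℝ) ≤ i' + c' + f c') :
    (i : ℝ) + 5 / 6 * c + g c - c / 2 * Dg ≤ j ∧
      (j : ℝ) ≤ i + 7 / 4 * c + f c + c / 2 * Df := by
  obtain ⟨hi1, hi2⟩ := hi
  obtain ⟨hj1, hj2⟩ := hj
  obtain ⟨hc1, hc2⟩ := hc
  obtain ⟨hg1, hg2⟩ := hgap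
  have hDg0 : 0 ≤ Dg := le_trans (le_max_right _ _) (hDg 0)
  have hDf0 : 0 ≤ Df := le_trans (le_max_right _ _) (hDf 0)
  have hf : f c' - f c ≤ Df * (c' - c) := telescope_upper f Df hDf c c' hc2
  have hg : g c - g c' ≤ Dg * (c' - c) := by
    have := telescope_upper (fun x => -(g x)) Dg
      (by intro x; have := hDg x; simp only [max_le_iff] at this ⊢; constructor <;> linarith [this.1, this.2]) c c' hc2
    simp at this; linarith
  have hcc : (c : ℝ) ≤ c' := by exact_mod_cast hc2
  have hcc' : (c' : ℝ) ≤ 3 / 2 * c := by linarith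
  have hj1' : (j' : ℝ) ≤ j := by exact_mod_cast hj1
  have hi1' : (i' : ℝ) ≤ i := by exact_mod_cast hi1
  constructor <;> nlinarith [sq_nonneg ((c':ℝ) - c)]
end

section
/- Suppose ∂⁻_f and ∂⁺_g exist. If a point (i, j, c) is covered from below by a point (i', j', c') with i' + c' + g(c') ≤ j' ≤ i' + c' + f(c'), then i + (5/9)c + g(c) - (c/3)·∂⁺_g ≤ j ≤ i + (7/6)c + f(c) + (c/3)·∂⁻_f. -/
variable {α : Type*}

lemma step_bound (h : ℕ → ℝ) (D : ℝ) (hD : ∀ x, max (h (x + 1) - h x) 0 ≤ D)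
    (m d : ℕ) : h (m + d) - h m ≤ d * D := by
  induction d with
  | zero => simp
  | succ d ih =>
    have h1 : h (m + d + 1) - h (m + d) ≤ D :=
      le_trans (le_max_left _ _) (hD (m + d))
    have he : m + (d + 1) = m + d + 1 := rfl
    rw [he]
    push_cast
    linarith

/-- If a point `(i, j, c)` is covered from below by a point `(i', j', c')`
satisfying the `f,g`-gap condition, then
`i + (5/9)c + g c - (c/3)∂⁺_g ≤ j ≤ i + (7/6)c + f c + (c/3)∂⁻_f`. -/
theorem covered_from_below_bounds (f g : ℕ → ℝ) (Dfm Dgp : ℝ)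
    (hDfm : ∀ x, max (f x - f (x + 1)) 0 ≤ Dfm)
    (hDgp : ∀ x, max (g (x + 1) - g x) 0 ≤ Dgp)
    (i j c i' j' c' : ℕ)
    (hpos : 0 < i ∧ 0 < j ∧ 0 < c ∧ 0 < i' ∧ 0 < j' ∧ 0 < c')
    (hi : i' ≤ i ∧ (i : ℝ) ≤ i' + c' / 6)
    (hj : j' ≤ j ∧ (j : ℝ) ≤ j' + c' / 6)
    (hc : c' ≤ c ∧ (c : ℝ) ≤ 3 / 2 * c')
    (hgap : (i' : ℝ) + c' + g c' ≤ j' ∧ (j' : ℝ) ≤ i' + c' + f c') :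
    (i : ℝ) + 5 / 9 * c + g c - c / 3 * Dgp ≤ j ∧
      (j : ℝ) ≤ i + 7 / 6 * c + f c + c / 3 * Dfm := by
  obtain ⟨hi1, hi2⟩ := hi
  obtain ⟨hj1, hj2⟩ := hj
  obtain ⟨hc1, hc2⟩ := hc
  obtain ⟨hg1, hg2⟩ := hgap
  have hDgp0 : 0 ≤ Dgp := le_trans (le_max_right _ _) (hDgp 0)
  have hDfm0 : 0 ≤ Dfm := le_trans (le_max_right _ _) (hDfm 0)
  have hcc : c = c' + (c - c') := by omega
  have hg3 : g c - g c' ≤ (c - c' : ℕ) * Dgp := by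
    have := step_bound g Dgp hDgp c' (c - c')
    rwa [← hcc] at this
  have hf3 : f c' - f c ≤ (c - c' : ℕ) * Dfm := by
    have := step_bound (fun x => - f x) Dfm (by
      intro x
      have he : (fun x => -f x) (x + 1) - (fun x => -f x) x = f x - f (x + 1) := by
        simp; ring
      rw [he]; exact hDfm x) c' (c - c')
    rw [← hcc] at this
    simp only [neg_sub_neg] at this
    linarith
  have hd : ((c - c' : ℕ) : ℝ) ≤ c / 3 := by
    have : ((c - c' : ℕ) : ℝ) = (c : ℝ) - c' := by
      push_cast [Nat.cast_sub hc1]; ring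
    rw [this]; linarith
  have hj1' : (j' : ℝ) ≤ j := Nat.cast_le.mpr hj1
  have hc1' : (c' : ℝ) ≤ c := Nat.cast_le.mpr hc1
  have hi1' : (i' : ℝ) ≤ i := Nat.cast_le.mpr hi1
  constructor
  · nlinarith [mul_le_mul_of_nonneg_right hd hDgp0]
  · nlinarith [mul_le_mul_of_nonneg_right hd hDfm0]
end

section
/- Assign weight ρ(i,j,c) = 1/c³ to each point. If σ is a gapped repeat represented by point (i', j', c') with c' ≥ 6, and V[σ] is the set of points (i,j,c) covered from above by (i',j',c') (i.e., i' ≤ i ≤ i'+c'/6, j' ≤ j ≤ j'+c'/6, 2c'/3 ≤ c ≤ c'), then ρ(V[σ]) = Σ_{(i,j,c)∈V[σ]} 1/c³ is bounded below by a positive absolute constant (e.g., ρ(V[σ]) > (1/36)·(5/32)). -/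
variable {α : Type*}

private lemma aux_numeric (N A D : ℝ) (hN : 0 < N) (h6 : N < 6 * A) (h3 : N ≤ 3 * D)
    (hD : 0 < D) : 5 / 1152 * N ^ 3 < A * (A * D) := by
  have hA : 0 < A := by linarith
  have q1 : N * N < 6 * A * N := mul_lt_mul_of_pos_right h6 hN
  have q2 : 6 * A * N < 6 * A * (6 * A) := mul_lt_mul_of_pos_left h6 (by positivity)
  have p3 : N * N * D < 6 * A * (6 * A) * D := mul_lt_mul_of_pos_right (q1.trans q2) hD
  have p2 : N * N * N ≤ N * N * (3 * D) := mul_le_mul_of_nonneg_left h3 (by positivity)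
  nlinarith [p2, p3, pow_pos hN 3]

/-- The total weight `ρ(V[σ]) = Σ 1/c³` of the points covered from above by a
point `(i', j', c')` with `c' ≥ 6` exceeds the absolute constant
`(1/36)·(5/32)`. -/
theorem covered_weight_lower_bound (i' j' c' : ℕ) (h : 6 ≤ c') :
    1 / 36 * (5 / 32) <
      ∑ i ∈ Finset.Icc i' (i' + c' / 6), ∑ j ∈ Finset.Icc j' (j' + c' / 6),
        ∑ c ∈ (Finset.Icc 1 c').filter (fun c => 2 * c' ≤ 3 * c),
          (1 / (c : ℝ) ^ 3) := by
  set m := c' / 6 with hm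
  set k := (2 * c' + 2) / 3 with hk
  have hfilter : (Finset.Icc 1 c').filter (fun c => 2 * c' ≤ 3 * c) = Finset.Icc k c' := by
    ext c
    simp only [Finset.mem_filter, Finset.mem_Icc]
    omega
  rw [hfilter]
  have hc0 : (0:ℝ) < (c' : ℝ) := by positivity
  set S := ∑ c ∈ Finset.Icc k c', (1 / (c : ℝ) ^ 3) with hSdef
  set D : ℕ := c' + 1 - k with hD
  have hS : (D : ℝ) * (1 / (c' : ℝ) ^ 3) ≤ S := by
    have hle : ∀ c ∈ Finset.Icc k c', (1 / (c' : ℝ) ^ 3) ≤ 1 / (c : ℝ) ^ 3 := by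
      intro c hc
      simp only [Finset.mem_Icc] at hc
      have h1 : (0:ℝ) < (c:ℝ) := by
        have : (0:ℕ) < c := by omega
        exact_mod_cast this
      have h2 : (c:ℝ) ≤ (c':ℝ) := by exact_mod_cast hc.2
      gcongr
    have := Finset.card_nsmul_le_sum (Finset.Icc k c') (fun c => 1 / (c : ℝ) ^ 3)
      (1 / (c' : ℝ) ^ 3) hle
    have hcard : (Finset.Icc k c').card = D := by
      rw [Nat.card_Icc]
    rw [hcard, nsmul_eq_mul] at this
    exact this
  have hDpos : (0:ℝ) < (D:ℝ) := by
    have : 0 < D := by omega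
    exact_mod_cast this
  have hSpos : 1 / 36 * (5 / 32) < ((m:ℝ) + 1) * (((m:ℝ) + 1) * S) := by
    have h6 : (c':ℝ) < 6 * ((m:ℝ) + 1) := by
      have : c' < 6 * (m + 1) := by omega
      exact_mod_cast this
    have h3 : (c':ℝ) ≤ 3 * (D:ℝ) := by
      have : c' ≤ 3 * D := by omega
      exact_mod_cast this
    have key : 1 / 36 * (5 / 32) < ((m:ℝ) + 1) * (((m:ℝ) + 1) * ((D:ℝ) * (1 / (c' : ℝ) ^ 3))) := by
      set A := (m:ℝ) + 1 with hA
      have hApos : (0:ℝ) < A := by positivity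
      have hN3 : (0:ℝ) < (c':ℝ)^3 := by positivity
      have hgoal : 5 / 1152 * (c':ℝ)^3 < A * (A * (D:ℝ)) :=
        aux_numeric (c':ℝ) A (D:ℝ) hc0 h6 h3 hDpos
      calc (1:ℝ) / 36 * (5 / 32) = 5 / 1152 := by norm_num
        _ < A * (A * (D:ℝ)) / (c':ℝ)^3 := by
            rw [lt_div_iff₀ hN3]; exact hgoal
        _ = A * (A * ((D:ℝ) * (1 / (c':ℝ)^3))) := by ring
    calc 1 / 36 * (5 / 32) < ((m:ℝ) + 1) * (((m:ℝ) + 1) * ((D:ℝ) * (1 / (c' : ℝ) ^ 3))) := key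
      _ ≤ ((m:ℝ) + 1) * (((m:ℝ) + 1) * S) := by
          have hA0 : (0:ℝ) ≤ (m:ℝ) + 1 := by positivity
          gcongr
  have hcardi : (Finset.Icc i' (i' + m)).card = m + 1 := by rw [Nat.card_Icc]; omega
  have hcardj : (Finset.Icc j' (j' + m)).card = m + 1 := by rw [Nat.card_Icc]; omega
  rw [Finset.sum_congr rfl (fun i _ => Finset.sum_const S), hcardj, Finset.sum_const, hcardi,
    nsmul_eq_mul, nsmul_eq_mul]
  push_cast
  exact hSpos
end

section
/- Let σ = (u', u'') be a maximal gapped repeat in w, and suppose u' is properly contained in a factor z of w with beg(z) ≤ beg(u') and end(u') ≤ end(z), such that w also contains a factor z'' = z starting at beg(z) + p(σ2) for some other repeat σ2 with period p2 ≠ p(σ) and |p(σ) - p2| = d ≤ (5/12)|u''|. Then u'' has period d, so u'' is a repetition (|u''| ≥ 2d ≥ 2·minimal period). -/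
variable {α : Type*}

/-- If the left copy of a maximal gapped repeat `σ = (s, t, c)` (with period
`p1 = t - s`) coincides with its translate by another period `p2 ≠ p1`, and
`d = |p1 - p2| ≤ (5/12)c`, then the right copy has period `d` and hence is a
repetition. -/
theorem contained_copy_periodic (w : ℕ → α) (n s t c p2 : ℕ)
    (hσ : IsMaxGappedRepeat w n s t c)
    (htrans : ∀ k, k < c → w (s + k) = w (s + p2 + k))
    (hne : p2 ≠ t - s)
    (hd : 12 * Nat.dist p2 (t - s) ≤ 5 * c) :
    (∀ k, k + Nat.dist p2 (t - s) < c →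
      w (t + k) = w (t + k + Nat.dist p2 (t - s))) ∧
      ∃ q, IsRepetition w t (t + c - 1) q := by
  classical
  obtain ⟨⟨hc, hst, hrep⟩, hs1, hn, hleft, hright⟩ := hσ
  set d := Nat.dist p2 (t - s) with hdef
  have hdd : d = p2 - (t - s) + ((t - s) - p2) := rfl
  have hd0 : 0 < d := by omega
  have key : ∀ k, k + d < c → w (t + k) = w (t + k + d) := by
    intro k hk
    by_cases h : p2 ≤ t - s
    · have e1 : s + p2 + (k + d) = t + k := by omega
      have e2 : t + (k + d) = t + k + d := by omega
      calc w (t + k) = w (s + p2 + (k + d)) := by rw [e1]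
        _ = w (s + (k + d)) := (htrans (k + d) hk).symm
        _ = w (t + (k + d)) := hrep (k + d) hk
        _ = w (t + k + d) := by rw [e2]
    · have e1 : s + p2 + k = t + k + d := by omega
      calc w (t + k) = w (s + k) := (hrep k (by omega)).symm
        _ = w (s + p2 + k) := htrans k (by omega)
        _ = w (t + k + d) := by rw [e1]
  have hper : HasPeriod w t (t + c - 1) d := by
    intro k hk1 hk2
    have h1 : t + (k - t) = k := by omega
    have h2 : t + (k - t) + d = k + d := by omega
    have := key (k - t) (by omega)
    rwa [h1] at this
  have hex : ∃ q, 0 < q ∧ HasPeriod w t (t + c - 1) q := ⟨d, hd0, hper⟩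
  refine ⟨key, Nat.find hex, ⟨⟨(Nat.find_spec hex).1, (Nat.find_spec hex).2, ?_⟩, ?_⟩⟩
  · intro q' hq' hq'per
    exact Nat.find_le ⟨hq', hq'per⟩
  · have hq_le : Nat.find hex ≤ d := Nat.find_le ⟨hd0, hper⟩
    omega
end
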